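/- arXiv:1601.05241 — 2 statements merged into one kernel-verified Lean document; each statement's English description precedes it below -/
import Mathlib

section
/- Let ρ̄ be a probability density on the torus 𝕋^d with ρ̄ ∈ L², let wⁿ(x) = n^β w¹(n^{β/d} x) be a rescaled bounded probability density with β ∈ [0,1], and let X¹,…,Xⁿ be i.i.d. random points with law ρ̄(x)dx. Then for the empirical measure μⁿ = (1/n)∑ᵢ δ_{Xᵢ}, one has E[∫ (μⁿ * wⁿ)²(x) dx] ≤ ‖w¹‖_∞ + ∫ ρ̄²(x) dx. -/
/-!
Expanding the square, `E ∫ (μⁿ * wⁿ)² = n⁻² ∑ᵢⱼ E ∫ wⁿ(Xᵢ - x) wⁿ(Xⱼ - x) dx`. Each of the `n`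
diagonal terms is at most `‖wⁿ‖_∞ ≤ n^β ‖w¹‖_∞ ≤ n ‖w¹‖_∞`. For `i ≠ j`, independence turns the
term into `∫ (ρ̄ * wⁿ)²`, and Jensen's inequality `(ρ̄ * wⁿ)² ≤ ρ̄² * wⁿ` for the probability
density `wⁿ` bounds it by `∫ ρ̄²`. The computation is done with lower Lebesgue integrals, where
no integrability has to be checked; the Bochner integral is bounded by them only at the end.
-/

open MeasureTheory ProbabilityTheory
open scoped ENNReal

theorem sq_lintegral_mul_le_lintegral_sq_mul {α : Type*} [MeasurableSpace α] {μ : Measure α}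
    {f w : α → ℝ≥0∞} (hf : AEMeasurable f μ) (hw : AEMeasurable w μ)
    (hw_le : ∫⁻ a, w a ∂μ ≤ 1) :
    (∫⁻ a, f a * w a ∂μ) ^ 2 ≤ ∫⁻ a, f a ^ 2 * w a ∂μ := by
  have hsqrt : ∀ a, (f a ^ 2 * w a) ^ (2⁻¹ : ℝ) * w a ^ (2⁻¹ : ℝ) = f a * w a := fun a => by
    rw [← ENNReal.mul_rpow_of_nonneg _ _ (by norm_num), mul_assoc, ← sq, ← mul_pow]
    exact_mod_cast ENNReal.pow_rpow_inv_natCast two_ne_zero _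
  have holder : ∫⁻ a, f a * w a ∂μ
      ≤ (∫⁻ a, f a ^ 2 * w a ∂μ) ^ (2⁻¹ : ℝ) * (∫⁻ a, w a ∂μ) ^ (2⁻¹ : ℝ) := by
    rw [← lintegral_congr hsqrt]
    exact ENNReal.lintegral_mul_norm_pow_le (f := fun a => f a ^ 2 * w a)
      ((hf.pow_const 2).mul hw) hw (p := 2⁻¹) (q := 2⁻¹) (by norm_num) (by norm_num) (by norm_num)
  calc (∫⁻ a, f a * w a ∂μ) ^ 2
      ≤ ((∫⁻ a, f a ^ 2 * w a ∂μ) ^ (2⁻¹ : ℝ) * 1) ^ 2 := by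
        gcongr
        exact holder.trans (by gcongr; exact ENNReal.rpow_le_one hw_le (by norm_num))
    _ = ∫⁻ a, f a ^ 2 * w a ∂μ := by
        rw [mul_one]; exact_mod_cast ENNReal.rpow_inv_natCast_pow two_ne_zero _

theorem lintegral_sq_sum {α ι : Type*} [MeasurableSpace α] {μ : Measure α} (s : Finset ι)
    {f : ι → α → ℝ≥0∞} (hf : ∀ i ∈ s, AEMeasurable (f i) μ) :
    ∫⁻ a, (∑ i ∈ s, f i a) ^ 2 ∂μ = ∑ i ∈ s, ∑ j ∈ s, ∫⁻ a, f i a * f j a ∂μ := by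
  simp_rw [sq, Finset.sum_mul_sum]
  rw [lintegral_finsetSum' (f := fun i a => ∑ j ∈ s, f i a * f j a) _
    fun i hi => Finset.aemeasurable_fun_sum _ fun j hj => (hf i hi).mul (hf j hj)]
  exact Finset.sum_congr rfl fun i hi =>
    lintegral_finsetSum' (f := fun j a => f i a * f j a) _ fun j hj => (hf i hi).mul (hf j hj)

theorem integral_integral_le_of_lintegral_lintegral_enorm_le {α β : Type*} [MeasurableSpace α]
    [MeasurableSpace β] {μ : Measure α} {ν : Measure β} {f : α → β → ℝ} {r : ℝ} (hr : 0 ≤ r)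
    (h : ∫⁻ a, ∫⁻ b, ‖f a b‖ₑ ∂ν ∂μ ≤ ENNReal.ofReal r) :
    ∫ a, ∫ b, f a b ∂ν ∂μ ≤ r := by
  refine (ENNReal.ofReal_le_ofReal_iff hr).1 ?_
  calc ENNReal.ofReal (∫ a, ∫ b, f a b ∂ν ∂μ)
      ≤ ‖∫ a, ∫ b, f a b ∂ν ∂μ‖ₑ := Real.ofReal_le_enorm _
    _ ≤ ∫⁻ a, ‖∫ b, f a b ∂ν‖ₑ ∂μ := enorm_integral_le_lintegral_enorm _
    _ ≤ ∫⁻ a, ∫⁻ b, ‖f a b‖ₑ ∂ν ∂μ := lintegral_mono fun a => enorm_integral_le_lintegral_enorm _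
    _ ≤ ENNReal.ofReal r := h

theorem lintegral_comp_eq_lintegral_mul_of_map_eq_withDensity {Ω α : Type*} [MeasurableSpace Ω]
    [MeasurableSpace α] {P : Measure Ω} {μ : Measure α} {X : Ω → α} {R g : α → ℝ≥0∞}
    (hX : Measurable X) (hR : Measurable R) (hg : Measurable g)
    (hlaw : P.map X = μ.withDensity R) :
    ∫⁻ ω, g (X ω) ∂P = ∫⁻ y, R y * g y ∂μ := by
  rw [← lintegral_map hg hX, hlaw, lintegral_withDensity_eq_lintegral_mul _ hR hg, Pi.mul_def]

section Translates

variable {G : Type*} [MeasurableSpace G] [AddGroup G] [MeasurableAdd G] [MeasurableNeg G]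
  {μ : Measure G} [μ.IsAddLeftInvariant] [μ.IsNegInvariant] {W : G → ℝ≥0∞}

theorem lintegral_sq_sub_le {C : ℝ≥0∞} (hW : Measurable W) (hW_le : ∫⁻ x, W x ∂μ ≤ 1)
    (hWC : ∀ x, W x ≤ C) (z : G) :
    ∫⁻ x, W (z - x) ^ 2 ∂μ ≤ C :=
  calc ∫⁻ x, W (z - x) ^ 2 ∂μ
      ≤ ∫⁻ x, C * W (z - x) ∂μ := lintegral_mono fun x => by rw [sq]; gcongr; exact hWC _
    _ = C * ∫⁻ x, W x ∂μ := by
        rw [lintegral_const_mul _ (by fun_prop), lintegral_sub_left_eq_self]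
    _ ≤ C := mul_le_of_le_one_right' hW_le

theorem lintegral_lintegral_mul_sub_le_of_indepFun [MeasurableSub₂ G] [SFinite μ]
    [μ.IsAddRightInvariant]
    {Ω : Type*} [MeasurableSpace Ω] {P : Measure Ω} [SFinite P] {X Y : Ω → G} {R : G → ℝ≥0∞}
    (hX : Measurable X) (hY : Measurable Y) (hXY : IndepFun X Y P)
    (hX_law : P.map X = μ.withDensity R) (hY_law : P.map Y = μ.withDensity R)
    (hR : Measurable R) (hW : Measurable W) (hW_le : ∫⁻ x, W x ∂μ ≤ 1) :
    ∫⁻ ω, ∫⁻ x, W (X ω - x) * W (Y ω - x) ∂μ ∂P ≤ ∫⁻ y, R y ^ 2 ∂μ := by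
  have hWx : ∀ x, Measurable fun y => W (y - x) := fun x => by fun_prop
  calc ∫⁻ ω, ∫⁻ x, W (X ω - x) * W (Y ω - x) ∂μ ∂P
      = ∫⁻ x, ∫⁻ ω, W (X ω - x) * W (Y ω - x) ∂P ∂μ :=
        lintegral_lintegral_swap (by fun_prop)
    _ = ∫⁻ x, (∫⁻ y, R y * W (y - x) ∂μ) ^ 2 ∂μ := lintegral_congr fun x => by
        rw [lintegral_mul_eq_lintegral_mul_lintegral_of_indepFun''
            (f := fun ω => W (X ω - x)) (g := fun ω => W (Y ω - x))
            (by fun_prop) (by fun_prop) (hXY.comp (hWx x) (hWx x)),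
          lintegral_comp_eq_lintegral_mul_of_map_eq_withDensity hX hR (hWx x) hX_law,
          lintegral_comp_eq_lintegral_mul_of_map_eq_withDensity hY hR (hWx x) hY_law, sq]
    _ ≤ ∫⁻ x, ∫⁻ y, R y ^ 2 * W (y - x) ∂μ ∂μ := lintegral_mono fun x =>
        sq_lintegral_mul_le_lintegral_sq_mul hR.aemeasurable (hWx x).aemeasurable
          ((lintegral_sub_right_eq_self W x).trans_le hW_le)
    _ = ∫⁻ y, ∫⁻ x, R y ^ 2 * W (y - x) ∂μ ∂μ :=
        lintegral_lintegral_swap (by fun_prop)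
    _ ≤ ∫⁻ y, R y ^ 2 ∂μ := lintegral_mono fun y => by
        rw [lintegral_const_mul _ (by fun_prop), lintegral_sub_left_eq_self]
        exact mul_le_of_le_one_right' hW_le

theorem lintegral_lintegral_sq_mean_sub_le [MeasurableSub₂ G] [SFinite μ]
    [μ.IsAddRightInvariant] {Ω : Type*} [MeasurableSpace Ω] {P : Measure Ω}
    [IsProbabilityMeasure P] {n : ℕ} (hn : n ≠ 0) {X : Fin n → Ω → G} {R : G → ℝ≥0∞} {C : ℝ≥0∞}
    (hX : ∀ i, Measurable (X i)) (hX_indep : iIndepFun X P)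
    (hX_law : ∀ i, P.map (X i) = μ.withDensity R) (hR : Measurable R) (hW : Measurable W)
    (hW_le : ∫⁻ x, W x ∂μ ≤ 1) (hWC : ∀ x, W x ≤ C) :
    ∫⁻ ω, ∫⁻ x, ((n : ℝ≥0∞)⁻¹ * ∑ i, W (X i ω - x)) ^ 2 ∂μ ∂P
      ≤ (n : ℝ≥0∞)⁻¹ * C + ∫⁻ y, R y ^ 2 ∂μ := by
  set Q := ∫⁻ y, R y ^ 2 ∂μ
  have hn' : (n : ℝ≥0∞) ≠ 0 := Nat.cast_ne_zero.mpr hn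
  have hF : ∀ i, Measurable fun p : Ω × G => W (X i p.1 - p.2) := fun i => by fun_prop
  have hpair : ∀ i j, ∫⁻ p : Ω × G, W (X i p.1 - p.2) * W (X j p.1 - p.2) ∂P.prod μ
      ≤ (if i = j then C else 0) + Q := fun i j => by
    rw [lintegral_prod (fun p : Ω × G => W (X i p.1 - p.2) * W (X j p.1 - p.2)) (by fun_prop)]
    split_ifs with hij
    · subst hij
      calc ∫⁻ ω, ∫⁻ x, W (X i ω - x) * W (X i ω - x) ∂μ ∂P
          ≤ ∫⁻ _, C ∂P := lintegral_mono fun ω => by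
            simpa only [sq] using lintegral_sq_sub_le hW hW_le hWC (X i ω)
        _ ≤ C + Q := by simp
    · rw [zero_add]
      exact lintegral_lintegral_mul_sub_le_of_indepFun (hX i) (hX j)
        (hX_indep.indepFun hij) (hX_law i) (hX_law j) hR hW hW_le
  calc ∫⁻ ω, ∫⁻ x, ((n : ℝ≥0∞)⁻¹ * ∑ i, W (X i ω - x)) ^ 2 ∂μ ∂P
      = (n : ℝ≥0∞)⁻¹ ^ 2 * ∑ i, ∑ j,
          ∫⁻ p : Ω × G, W (X i p.1 - p.2) * W (X j p.1 - p.2) ∂P.prod μ := by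
        rw [← lintegral_sq_sum _ fun i _ => (hF i).aemeasurable,
          ← lintegral_const_mul' _ _ (by simp [hn']),
          lintegral_prod _ (by fun_prop)]
        simp only [mul_pow]
    _ ≤ (n : ℝ≥0∞)⁻¹ ^ 2 * ∑ i : Fin n, ∑ j : Fin n, ((if i = j then C else 0) + Q) := by
        gcongr with i _ j _
        exact hpair i j
    _ = (n : ℝ≥0∞)⁻¹ * C + Q := by
        simp only [Finset.sum_add_distrib, Finset.sum_ite_eq, Finset.mem_univ, if_true,
          Finset.sum_const, Finset.card_univ, Fintype.card_fin, nsmul_eq_mul]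
        have hinv : (n : ℝ≥0∞)⁻¹ * n = 1 := ENNReal.inv_mul_cancel hn' (by simp)
        calc (n : ℝ≥0∞)⁻¹ ^ 2 * (n * C + n * (n * Q))
            = (n : ℝ≥0∞)⁻¹ * n * (n : ℝ≥0∞)⁻¹ * C + ((n : ℝ≥0∞)⁻¹ * n) ^ 2 * Q := by ring
          _ = (n : ℝ≥0∞)⁻¹ * C + Q := by rw [hinv]; ring

end Translates

theorem stmt_3_general (d : ℕ)
    (Ω : Type*) [MeasurableSpace Ω] (P : Measure Ω) [IsProbabilityMeasure P]
    (n : ℕ) (hn : 0 < n) (β : ℝ) (hβ : β ∈ Set.Icc (0:ℝ) 1)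
    (M : ℝ) (hM : 0 ≤ M)
    (wn : (Fin d → AddCircle (1:ℝ)) → ℝ)
    (hwn_meas : Measurable wn) (hwn_nonneg : ∀ x, 0 ≤ wn x)
    (hwn_int : ∫ x, wn x = 1)
    (hwn_bound : ∀ x, wn x ≤ (n : ℝ) ^ β * M)
    (ρ : (Fin d → AddCircle (1:ℝ)) → ℝ)
    (hρ_meas : Measurable ρ) (hρ_nonneg : ∀ x, 0 ≤ ρ x)
    (hρ_L2 : MemLp ρ 2)
    (X : Fin n → Ω → (Fin d → AddCircle (1:ℝ)))
    (hX_meas : ∀ i, Measurable (X i))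
    (hX_indep : iIndepFun X P)
    (hX_law : ∀ i, Measure.map (X i) P
      = volume.withDensity (fun x => ENNReal.ofReal (ρ x))) :
    ∫ ω, (∫ x, ((n : ℝ)⁻¹ * ∑ i, wn (X i ω - x)) ^ 2) ∂P
      ≤ M + ∫ x, (ρ x) ^ 2 := by
  -- instance search does not find this one
  have : (volume : Measure (Fin d → AddCircle (1:ℝ))).IsNegInvariant :=
    Pi.isNegInvariant_volume
  have hn' : n ≠ 0 := hn.ne'
  have hW_int : ∫⁻ x, ‖wn x‖ₑ = 1 := by
    rw [lintegral_enorm_of_nonneg hwn_nonneg, ← ofReal_integral_eq_lintegral_ofReal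
      (Integrable.of_integral_ne_zero (by simp [hwn_int])) (ae_of_all _ hwn_nonneg),
      hwn_int, ENNReal.ofReal_one]
  have hW_bound : ∀ x, ‖wn x‖ₑ ≤ n * ENNReal.ofReal M := fun x => by
    have hpow : (n : ℝ) ^ β ≤ n := Real.rpow_le_self_of_one_le (by exact_mod_cast hn) hβ.2
    rw [Real.enorm_of_nonneg (hwn_nonneg x), ← ENNReal.ofReal_natCast, ← ENNReal.ofReal_mul
      (by positivity)]
    exact ENNReal.ofReal_le_ofReal ((hwn_bound x).trans (by gcongr))
  have hρ_sq : ∫⁻ y, ENNReal.ofReal (ρ y) ^ 2 = ENNReal.ofReal (∫ y, ρ y ^ 2) := by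
    rw [ofReal_integral_eq_lintegral_ofReal hρ_L2.integrable_sq (ae_of_all _ fun y => sq_nonneg _)]
    exact lintegral_congr fun y => (ENNReal.ofReal_pow (hρ_nonneg y) 2).symm
  refine integral_integral_le_of_lintegral_lintegral_enorm_le (by positivity) ?_
  calc ∫⁻ ω, (∫⁻ x, ‖((n : ℝ)⁻¹ * ∑ i, wn (X i ω - x)) ^ 2‖ₑ) ∂P
      ≤ ∫⁻ ω, (∫⁻ x, ((n : ℝ≥0∞)⁻¹ * ∑ i, ‖wn (X i ω - x)‖ₑ) ^ 2) ∂P :=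
        lintegral_mono fun ω => lintegral_mono fun x => by
          rw [enorm_pow, enorm_mul, enorm_inv (by simpa), Real.enorm_natCast]
          gcongr
          exact enorm_sum_le _ _
    _ ≤ (n : ℝ≥0∞)⁻¹ * (n * ENNReal.ofReal M) + ENNReal.ofReal (∫ y, ρ y ^ 2) := by
        rw [← hρ_sq]
        exact lintegral_lintegral_sq_mean_sub_le hn' hX_meas hX_indep hX_law
          hρ_meas.ennreal_ofReal hwn_meas.enorm hW_int.le hW_bound
    _ = ENNReal.ofReal (M + ∫ y, ρ y ^ 2) := by
        rw [ENNReal.inv_mul_cancel_left (by simpa) (by simp),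
          ENNReal.ofReal_add hM (integral_nonneg fun y => sq_nonneg _)]

/-- Moment bound for mollified empirical measures of i.i.d. samples on the torus `𝕋^d`:
if `ρ̄ ∈ L²(𝕋^d)` is a probability density, `wⁿ` is a probability density bounded by
`n^β ‖w¹‖_∞` with `β ∈ [0,1]`, and `X¹,…,Xⁿ` are i.i.d. with law `ρ̄ dx`, then
`E[∫ (μⁿ * wⁿ)²(x) dx] ≤ ‖w¹‖_∞ + ∫ ρ̄²`. -/
theorem stmt_3 (d : ℕ) (hd : 0 < d)
    (Ω : Type*) [MeasurableSpace Ω] (P : Measure Ω) [IsProbabilityMeasure P]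
    (n : ℕ) (hn : 0 < n) (β : ℝ) (hβ : β ∈ Set.Icc (0:ℝ) 1)
    (M : ℝ) (hM : 0 ≤ M)
    (wn : (Fin d → AddCircle (1:ℝ)) → ℝ)
    (hwn_meas : Measurable wn) (hwn_nonneg : ∀ x, 0 ≤ wn x)
    (hwn_int : ∫ x, wn x = 1)
    (hwn_bound : ∀ x, wn x ≤ (n : ℝ) ^ β * M)
    (ρ : (Fin d → AddCircle (1:ℝ)) → ℝ)
    (hρ_meas : Measurable ρ) (hρ_nonneg : ∀ x, 0 ≤ ρ x)
    (hρ_int : ∫ x, ρ x = 1) (hρ_L2 : MemLp ρ 2)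
    (X : Fin n → Ω → (Fin d → AddCircle (1:ℝ)))
    (hX_meas : ∀ i, Measurable (X i))
    (hX_indep : iIndepFun X P)
    (hX_law : ∀ i, Measure.map (X i) P
      = volume.withDensity (fun x => ENNReal.ofReal (ρ x))) :
    ∫ ω, (∫ x, ((n : ℝ)⁻¹ * ∑ i, wn (X i ω - x)) ^ 2) ∂P
      ≤ M + ∫ x, (ρ x) ^ 2 :=
  stmt_3_general d Ω P n hn β hβ M hM wn hwn_meas hwn_nonneg hwn_int hwn_bound ρ hρ_meas hρ_nonneg
    hρ_L2 X hX_meas hX_indep hX_law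
end

section
/- Let X, Y be Polish metric spaces, (fⁿ) random variables with values in X converging in law to f, and (Fⁿ) maps X → Y pointwise converging to F with sup_n Lip(Fⁿ) < ∞. Then Fⁿ∘fⁿ converges in law to F∘f. -/
/-!
Test against a bounded `K`-Lipschitz `φ`; this suffices for weak convergence. The functions
`gₙ = |φ ∘ Fⁿ - φ ∘ F|` are uniformly bounded, equi-Lipschitz and tend to `0` pointwise, so their
tail suprema `Gₙ = sup_{k ≥ n} gₖ` are bounded Lipschitz and decrease to `0`. Weak convergence of
the laws `pᵏ` then gives `limsup_k ∫ gₖ dpᵏ ≤ lim_k ∫ Gₙ dpᵏ = ∫ Gₙ dp`, which tends to `0` by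
dominated convergence; combined with `∫ φ ∘ F dpⁿ → ∫ φ ∘ F dp` this proves the claim, without any
tightness argument.
-/

open MeasureTheory Filter Topology
open scoped NNReal BoundedContinuousFunction

theorem LipschitzWith.of_tendsto {α β ι : Type*} [PseudoEMetricSpace α] [PseudoEMetricSpace β]
    {l : Filter ι} [l.NeBot] {K : ℝ≥0} {F : ι → α → β} {F₀ : α → β}
    (hF : ∀ i, LipschitzWith K (F i)) (hlim : ∀ x, Tendsto (F · x) l (𝓝 (F₀ x))) :
    LipschitzWith K F₀ :=
  (isClosed_setOfPred_lipschitzWith K).mem_of_tendsto (tendsto_pi_nhds.2 hlim)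
    (Eventually.of_forall hF)

section TailSup

variable {X : Type*} {g : ℕ → X → ℝ} {C : ℝ}

noncomputable def tailSup (g : ℕ → X → ℝ) (n : ℕ) (x : X) : ℝ :=
  ⨆ k, g (n + k) x

theorem le_tailSup (hC : ∀ k x, g k x ≤ C) {n k : ℕ} (hnk : n ≤ k) (x : X) :
    g k x ≤ tailSup g n x := by
  obtain ⟨j, rfl⟩ := Nat.exists_eq_add_of_le hnk
  exact le_ciSup (f := fun j => g (n + j) x) ⟨C, by rintro _ ⟨i, rfl⟩; exact hC _ x⟩ j

theorem tailSup_le (hC : ∀ k x, g k x ≤ C) (n : ℕ) (x : X) : tailSup g n x ≤ C :=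
  ciSup_le fun k => hC (n + k) x

theorem lipschitzWith_tailSup [PseudoMetricSpace X] (hC : ∀ k x, g k x ≤ C) {K : ℝ≥0}
    (hK : ∀ k, LipschitzWith K (g k)) (n : ℕ) : LipschitzWith K (tailSup g n) :=
  LipschitzWith.of_le_add_mul K fun x y => ciSup_le fun k =>
    calc g (n + k) x ≤ g (n + k) y + K * dist x y := (hK (n + k)).le_add_mul x y
      _ ≤ tailSup g n y + K * dist x y := by
        grw [le_tailSup hC (Nat.le_add_right n k) y]

theorem tendsto_tailSup (hC : ∀ k x, g k x ≤ C) {x : X} (hlim : Tendsto (g · x) atTop (𝓝 0)) :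
    Tendsto (tailSup g · x) atTop (𝓝 0) := by
  refine tendsto_order.2 ⟨fun a ha => ?_, fun b hb => ?_⟩
  · filter_upwards [hlim.eventually (lt_mem_nhds ha)] with n hn
    exact hn.trans_le (le_tailSup hC le_rfl x)
  · obtain ⟨N, hN⟩ := eventually_atTop.1 (hlim.eventually (gt_mem_nhds (half_pos hb)))
    filter_upwards [eventually_ge_atTop N] with n hn
    calc tailSup g n x ≤ b / 2 := ciSup_le fun k => (hN (n + k) (by omega)).le
      _ < b := half_lt_self hb

end TailSup

namespace MeasureTheory.ProbabilityMeasure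

theorem integral_map_of_continuous {Ω X : Type*} [MeasurableSpace Ω] [TopologicalSpace X]
    [MeasurableSpace X] [OpensMeasurableSpace X] (ν : ProbabilityMeasure Ω)
    {f : Ω → X} (hf : AEMeasurable f ν) {ψ : X → ℝ} (hψ : Continuous ψ) :
    ∫ x, ψ x ∂(ν.map hf) = ∫ ω, ψ (f ω) ∂ν :=
  integral_map hf hψ.aestronglyMeasurable

variable {X Y : Type*} [PseudoMetricSpace X] [MeasurableSpace X] [OpensMeasurableSpace X]
  [PseudoMetricSpace Y] {μs : ℕ → ProbabilityMeasure X} {μ : ProbabilityMeasure X}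

theorem tendsto_integral_zero_of_lipschitzWith (hμ : Tendsto μs atTop (𝓝 μ))
    {g : ℕ → X → ℝ} {C : ℝ} {K : ℝ≥0} (hg₀ : ∀ n x, 0 ≤ g n x) (hgC : ∀ n x, g n x ≤ C)
    (hK : ∀ n, LipschitzWith K (g n)) (hlim : ∀ x, Tendsto (g · x) atTop (𝓝 0)) :
    Tendsto (fun n => ∫ x, g n x ∂μs n) atTop (𝓝 0) := by
  have hint {ν : ProbabilityMeasure X} {h : X → ℝ} (hh : Continuous h) (h₀ : ∀ x, 0 ≤ h x)
      (hC : ∀ x, h x ≤ C) : Integrable h ν :=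
    .of_bound hh.aestronglyMeasurable C
      (ae_of_all _ fun x => (Real.norm_of_nonneg (h₀ x)).trans_le (hC x))
  have htail_nonneg n x : 0 ≤ tailSup g n x := (hg₀ n x).trans (le_tailSup hgC le_rfl x)
  have htail_cont n := (lipschitzWith_tailSup hgC hK n).continuous
  have htail : Tendsto (fun N => ∫ x, tailSup g N x ∂μ) atTop (𝓝 0) := by
    simpa using tendsto_integral_of_dominated_convergence (fun _ => C)
      (fun N => (htail_cont N).aestronglyMeasurable) (integrable_const C)
      (fun N => ae_of_all _ fun x => (Real.norm_of_nonneg (htail_nonneg N x)).trans_le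
        (tailSup_le hgC N x))
      (ae_of_all _ fun x => tendsto_tailSup hgC (hlim x))
  refine tendsto_order.2 ⟨fun a ha => .of_forall fun n =>
    ha.trans_le (integral_nonneg (hg₀ n)), fun ε hε => ?_⟩
  obtain ⟨N, hN⟩ := (htail.eventually (gt_mem_nhds hε)).exists
  have hconv : Tendsto (fun n => ∫ x, tailSup g N x ∂μs n) atTop
      (𝓝 (∫ x, tailSup g N x ∂μ)) := by
    refine tendsto_iff_forall_lipschitz_integral_tendsto.1 hμ _ ⟨C, fun x y => ?_⟩
      ⟨K, lipschitzWith_tailSup hgC hK N⟩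
    have := tailSup_le hgC N x; have := tailSup_le hgC N y
    have := htail_nonneg N x; have := htail_nonneg N y
    rw [Real.dist_eq, abs_sub_le_iff]; constructor <;> linarith
  filter_upwards [hconv.eventually (gt_mem_nhds hN), eventually_ge_atTop N] with n hn hNn
  calc ∫ x, g n x ∂μs n ≤ ∫ x, tailSup g N x ∂μs n :=
        integral_mono (hint (hK n).continuous (hg₀ n) (hgC n))
          (hint (htail_cont N) (htail_nonneg N) (tailSup_le hgC N))
          fun x => le_tailSup hgC hNn x
    _ < ε := hn

theorem tendsto_integral_comp_of_lipschitzWith (hμ : Tendsto μs atTop (𝓝 μ))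
    {F : ℕ → X → Y} {F₀ : X → Y} {L : ℝ≥0} (hL : ∀ n, LipschitzWith L (F n))
    (hF : ∀ x, Tendsto (F · x) atTop (𝓝 (F₀ x))) (φ : Y →ᵇ ℝ) {K : ℝ≥0}
    (hφ : LipschitzWith K φ) :
    Tendsto (fun n => ∫ x, φ (F n x) ∂μs n) atTop (𝓝 (∫ x, φ (F₀ x) ∂μ)) := by
  have hL₀ : LipschitzWith L F₀ := .of_tendsto hL hF
  let φF n : X →ᵇ ℝ := φ.compContinuous ⟨F n, (hL n).continuous⟩
  let φF₀ : X →ᵇ ℝ := φ.compContinuous ⟨F₀, hL₀.continuous⟩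
  have hdist := tendsto_integral_zero_of_lipschitzWith hμ (g := fun n x => dist (φF n x) (φF₀ x))
    (fun _ _ => dist_nonneg) (fun _ _ => φ.dist_le_two_norm _ _)
    (fun n => LipschitzWith.dist.comp ((hφ.comp (hL n)).prodMk (hφ.comp hL₀)))
    (fun x => tendsto_iff_dist_tendsto_zero.1 ((φ.continuous.tendsto _).comp (hF x)))
  refine (tendsto_iff_forall_integral_tendsto.1 hμ φF₀).congr_dist
    (squeeze_zero (fun _ => dist_nonneg) (fun n => ?_) hdist)
  rw [dist_comm, Real.dist_eq]
  calc |∫ x, φF n x ∂μs n - ∫ x, φF₀ x ∂μs n| = |∫ x, (φF n x - φF₀ x) ∂μs n| := by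
        rw [integral_sub ((φF n).integrable _) (φF₀.integrable _)]
    _ ≤ ∫ x, dist (φF n x) (φF₀ x) ∂μs n := abs_integral_le_integral_abs

variable [MeasurableSpace Y] [BorelSpace Y]

theorem tendsto_map_of_lipschitzWith (hμ : Tendsto μs atTop (𝓝 μ)) {F : ℕ → X → Y} {F₀ : X → Y}
    {L : ℝ≥0} (hL : ∀ n, LipschitzWith L (F n)) (hF : ∀ x, Tendsto (F · x) atTop (𝓝 (F₀ x))) :
    Tendsto (fun n => (μs n).map (hL n).continuous.aemeasurable) atTop
      (𝓝 (μ.map (LipschitzWith.of_tendsto hL hF).continuous.aemeasurable)) := by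
  refine tendsto_iff_forall_lipschitz_integral_tendsto.2 fun φ hφ_bdd ⟨K, hφ⟩ => ?_
  simp only [integral_map_of_continuous _ _ hφ.continuous]
  exact tendsto_integral_comp_of_lipschitzWith hμ hL hF ⟨⟨φ, hφ.continuous⟩, hφ_bdd⟩ hφ

end MeasureTheory.ProbabilityMeasure

theorem stmt_12_general (X Y : Type*)
    [MetricSpace X] [MeasurableSpace X] [BorelSpace X]
    [MetricSpace Y] [MeasurableSpace Y] [BorelSpace Y]
    (Ω : Type*) [MeasurableSpace Ω] (P : Measure Ω) [IsProbabilityMeasure P]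
    (f : ℕ → Ω → X) (f₀ : Ω → X)
    (hf_meas : ∀ n, Measurable (f n)) (hf₀_meas : Measurable f₀)
    (hf_law : ∀ ψ : BoundedContinuousFunction X ℝ,
      Filter.Tendsto (fun n => ∫ ω, ψ (f n ω) ∂P) Filter.atTop (nhds (∫ ω, ψ (f₀ ω) ∂P)))
    (F : ℕ → X → Y) (F₀ : X → Y) (L : NNReal)
    (hL : ∀ n, LipschitzWith L (F n))
    (hF_conv : ∀ x, Filter.Tendsto (fun n => F n x) Filter.atTop (nhds (F₀ x))) :
    ∀ φ : BoundedContinuousFunction Y ℝ,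
      Filter.Tendsto (fun n => ∫ ω, φ (F n (f n ω)) ∂P) Filter.atTop
        (nhds (∫ ω, φ (F₀ (f₀ ω)) ∂P)) := by
  let P' : ProbabilityMeasure Ω := ⟨P, inferInstance⟩
  have hμ : Tendsto (fun n => P'.map (hf_meas n).aemeasurable) atTop
      (𝓝 (P'.map hf₀_meas.aemeasurable)) := by
    refine ProbabilityMeasure.tendsto_iff_forall_integral_tendsto.2 fun ψ => ?_
    simp only [ProbabilityMeasure.integral_map_of_continuous _ _ ψ.continuous]
    exact hf_law ψ
  intro φ
  have hF₀ : LipschitzWith L F₀ := .of_tendsto hL hF_conv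
  have key := ProbabilityMeasure.tendsto_iff_forall_integral_tendsto.1
    (ProbabilityMeasure.tendsto_map_of_lipschitzWith hμ hL hF_conv) φ
  simp only [ProbabilityMeasure.integral_map_of_continuous _ _ φ.continuous,
    fun n => ProbabilityMeasure.integral_map_of_continuous P' (hf_meas n).aemeasurable
      (ψ := fun x => φ (F n x)) (φ.continuous.comp (hL n).continuous),
    ProbabilityMeasure.integral_map_of_continuous P' hf₀_meas.aemeasurable
      (ψ := fun x => φ (F₀ x)) (φ.continuous.comp hF₀.continuous)] at key
  exact key

/-- If `fⁿ` are `X`-valued random variables converging in law to `f` (Polish spaces),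
and `Fⁿ : X → Y` are uniformly Lipschitz maps converging pointwise to `F`, then
`Fⁿ∘fⁿ` converges in law to `F∘f`. Convergence in law is expressed by testing against
bounded continuous functions. -/
theorem stmt_12 (X Y : Type*)
    [MetricSpace X] [CompleteSpace X] [TopologicalSpace.SeparableSpace X]
    [MeasurableSpace X] [BorelSpace X]
    [MetricSpace Y] [CompleteSpace Y] [TopologicalSpace.SeparableSpace Y]
    [MeasurableSpace Y] [BorelSpace Y]
    (Ω : Type*) [MeasurableSpace Ω] (P : Measure Ω) [IsProbabilityMeasure P]
    (f : ℕ → Ω → X) (f₀ : Ω → X)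
    (hf_meas : ∀ n, Measurable (f n)) (hf₀_meas : Measurable f₀)
    (hf_law : ∀ ψ : BoundedContinuousFunction X ℝ,
      Filter.Tendsto (fun n => ∫ ω, ψ (f n ω) ∂P) Filter.atTop (nhds (∫ ω, ψ (f₀ ω) ∂P)))
    (F : ℕ → X → Y) (F₀ : X → Y) (L : NNReal)
    (hL : ∀ n, LipschitzWith L (F n))
    (hF_conv : ∀ x, Filter.Tendsto (fun n => F n x) Filter.atTop (nhds (F₀ x))) :
    ∀ φ : BoundedContinuousFunction Y ℝ,
      Filter.Tendsto (fun n => ∫ ω, φ (F n (f n ω)) ∂P) Filter.atTop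
        (nhds (∫ ω, φ (F₀ (f₀ ω)) ∂P)) :=
  stmt_12_general X Y Ω P f f₀ hf_meas hf₀_meas hf_law F F₀ L hL hF_conv
end
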